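/- Let β_l, β_r ∈ ℂ be nonzero and set a := (β_l β_r⁻¹ + β_l⁻¹ β_r)/2 and b := (β_l β_r⁻¹ − β_l⁻¹ β_r)/(2i). Then the scattering matrix is T := E(β_r)⁻¹ · E(β_l) = [[a, −b],[b, a]]; moreover a² + b² = 1 (so det T = 1), and if β_l² + β_r² ≠ 0 then a ≠ 0 and the reflection coefficient satisfies b/a = −i(β_l² − β_r²)/(β_l² + β_r²). -/

import Mathlib

open Complex

/-- The eigenvector matrix `E(β) = (1/2)[[β+β⁻¹, i(β−β⁻¹)],[−i(β−β⁻¹), β+β⁻¹]]`. -/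
noncomputable def Emat (β : ℂ) : Matrix (Fin 2) (Fin 2) ℂ :=
  (1 / 2 : ℂ) • !![β + β⁻¹, Complex.I * (β - β⁻¹);
                   -(Complex.I * (β - β⁻¹)), β + β⁻¹]

set_option maxHeartbeats 1600000 in
/-- The scattering matrix `T = E(β_r)⁻¹E(β_l)` equals `[[a, −b],[b, a]]` with
`a = (β_lβ_r⁻¹ + β_l⁻¹β_r)/2` and `b = (β_lβ_r⁻¹ − β_l⁻¹β_r)/(2i)`; moreover
`a² + b² = 1` (so `det T = 1`), and if `β_l² + β_r² ≠ 0` then `a ≠ 0` and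
`b/a = −i(β_l² − β_r²)/(β_l² + β_r²)`. -/
theorem scattering_matrix (βl βr : ℂ) (hβl : βl ≠ 0) (hβr : βr ≠ 0)
    (a b : ℂ) (ha : a = (βl * βr⁻¹ + βl⁻¹ * βr) / 2)
    (hb : b = (βl * βr⁻¹ - βl⁻¹ * βr) / (2 * Complex.I)) :
    (Emat βr)⁻¹ * Emat βl = !![a, -b; b, a] ∧
    a ^ 2 + b ^ 2 = 1 ∧
    (βl ^ 2 + βr ^ 2 ≠ 0 →
      a ≠ 0 ∧ b / a = -Complex.I * (βl ^ 2 - βr ^ 2) / (βl ^ 2 + βr ^ 2)) := by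
  have hdet : (Emat βr).det = 1 := by
    rw [Emat, Matrix.det_smul, Matrix.det_fin_two_of]
    simp only [Fintype.card_fin]
    field_simp
    try rw [div_eq_iff (by apply_rules [mul_ne_zero, Complex.I_ne_zero, two_ne_zero] <;>
      assumption)]
    ring_nf
    try simp only [Complex.I_sq]
    try ring_nf
    try ring
  have e00 : (βr + βr⁻¹) * a + Complex.I * (βr - βr⁻¹) * b = βl + βl⁻¹ := by
    subst ha hb
    field_simp
    try rw [div_eq_iff (by apply_rules [mul_ne_zero, Complex.I_ne_zero, two_ne_zero] <;>
      assumption)]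
    ring_nf
    try simp only [Complex.I_sq]
    try ring_nf
    try ring
  have e01 : (βr + βr⁻¹) * -b + Complex.I * (βr - βr⁻¹) * a = Complex.I * (βl - βl⁻¹) := by
    subst ha hb
    field_simp
    try rw [div_eq_iff (by apply_rules [mul_ne_zero, Complex.I_ne_zero, two_ne_zero] <;>
      assumption)]
    ring_nf
    try simp only [Complex.I_sq]
    try ring_nf
    try ring
  have e10 : -(Complex.I * (βr - βr⁻¹)) * a + (βr + βr⁻¹) * b = -(Complex.I * (βl - βl⁻¹)) := by
    subst ha hb
    field_simp
    try rw [div_eq_iff (by apply_rules [mul_ne_zero, Complex.I_ne_zero, two_ne_zero] <;>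
      assumption)]
    ring_nf
    try simp only [Complex.I_sq]
    try ring_nf
    try ring
  have e11 : -(Complex.I * (βr - βr⁻¹)) * -b + (βr + βr⁻¹) * a = βl + βl⁻¹ := by
    subst ha hb
    field_simp
    try rw [div_eq_iff (by apply_rules [mul_ne_zero, Complex.I_ne_zero, two_ne_zero] <;>
      assumption)]
    ring_nf
    try simp only [Complex.I_sq]
    try ring_nf
    try ring
  have hmul : Emat βr * !![a, -b; b, a] = Emat βl := by
    rw [Emat, Emat, Matrix.smul_mul, Matrix.mul_fin_two, e00, e01, e10, e11]
  have hinv : (Emat βr)⁻¹ * Emat βr = 1 := Matrix.nonsing_inv_mul _ (by simp [hdet])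
  refine ⟨?_, ?_, ?_⟩
  · rw [← hmul, ← Matrix.mul_assoc, hinv, Matrix.one_mul]
  · subst ha hb
    field_simp
    try rw [div_eq_iff (by apply_rules [mul_ne_zero, Complex.I_ne_zero, two_ne_zero] <;>
      assumption)]
    ring_nf
    try simp only [Complex.I_sq]
    try ring_nf
    try ring
  · intro hsum
    have ha' : a = (βl ^ 2 + βr ^ 2) / (2 * βl * βr) := by
      rw [ha]; field_simp
    have hane : a ≠ 0 := by
      rw [ha']
      exact div_ne_zero hsum (by simp [hβl, hβr])
    refine ⟨hane, ?_⟩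
    rw [hb, ha']
    field_simp
    try rw [div_eq_iff (by apply_rules [mul_ne_zero, Complex.I_ne_zero, two_ne_zero] <;>
      assumption)]
    ring_nf
    try simp only [Complex.I_sq]
    try ring_nf
    try ring
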